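/- arXiv:1308.5164 — 4 statements merged into one kernel-verified Lean document; each statement's English description precedes it below -/
import Mathlib

section
/- Let ℓ and m be two non-parallel lines in ℝ³ (their direction vectors are linearly independent) whose distance equals 2. Then the intersection of the closed solid unit cylinders {p : dist(p, ℓ) ≤ 1} ∩ {p : dist(p, m) ≤ 1} is a singleton: the two unit cylinders touch in exactly one point. -/
/-!
If `a ∈ ℓ` and `b ∈ m`, then `a - b` runs over a translate `x - K` of the plane `K` spanned by
the two directions, and `‖x - k‖` is least exactly when `k` is the orthogonal projection of `x`
onto `K`. As the directions are independent, this singles out one pair `A ∈ ℓ`, `B ∈ m` with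
`dist A B = 2`, and every other pair is farther apart. A point in both cylinders has nearest
points `a ∈ ℓ`, `b ∈ m` at distance at most `1`, so `dist a b ≤ 2`, whence `(a, b) = (A, B)`;
equality in the triangle inequality in a strictly convex space then makes the point the midpoint
of `AB`.
-/

noncomputable section

/-- The point/vector `(a, b, c)` in ℝ³ (Euclidean space). -/
def vec3 (a b c : ℝ) : EuclideanSpace ℝ (Fin 3) :=
  (WithLp.equiv 2 (Fin 3 → ℝ)).symm ![a, b, c]

/-- The line in ℝ³ through the point `P` with direction vector `w`:
the set `{P + s • w : s ∈ ℝ}`. -/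
def lineThrough (P w : EuclideanSpace ℝ (Fin 3)) : Set (EuclideanSpace ℝ (Fin 3)) :=
  Set.range fun s : ℝ => P + s • w

/-- `ℓ` is a line in ℝ³: a one-dimensional affine subspace, i.e. a set of the form
`{P + s • w : s ∈ ℝ}` for some point `P` and nonzero direction vector `w`. -/
def IsLine (ℓ : Set (EuclideanSpace ℝ (Fin 3))) : Prop :=
  ∃ P w : EuclideanSpace ℝ (Fin 3), w ≠ 0 ∧ ℓ = lineThrough P w

/-- The distance between two sets in ℝ³: the infimum of the Euclidean distances
between points of `s` and points of `t`. -/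
def setDist (s t : Set (EuclideanSpace ℝ (Fin 3))) : ℝ :=
  sInf (Set.image2 dist s t)

/-- The closed solid unit cylinder with axis `ℓ`. -/
def closedCylinder (ℓ : Set (EuclideanSpace ℝ (Fin 3))) : Set (EuclideanSpace ℝ (Fin 3)) :=
  {p | Metric.infDist p ℓ ≤ 1}

open Metric

namespace Submodule

variable {E : Type*} [NormedAddCommGroup E] [InnerProductSpace ℝ E]
  (K : Submodule ℝ E) [K.HasOrthogonalProjection] (x : E) {k : E}

theorem norm_sub_sq_eq_norm_sub_starProjection_sq_add (hk : k ∈ K) :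
    ‖x - k‖ ^ 2 = ‖x - K.starProjection x‖ ^ 2 + ‖K.starProjection x - k‖ ^ 2 := by
  have horth : inner ℝ (x - K.starProjection x) (K.starProjection x - k) = 0 :=
    K.inner_left_of_mem_orthogonal (K.sub_mem (K.starProjection_apply_mem x) hk)
      (K.sub_starProjection_mem_orthogonal x)
  rw [← sub_add_sub_cancel x (K.starProjection x) k, norm_add_sq_real, horth]
  ring

theorem norm_sub_starProjection_le (hk : k ∈ K) : ‖x - K.starProjection x‖ ≤ ‖x - k‖ := by
  rw [← sq_le_sq₀ (norm_nonneg _) (norm_nonneg _),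
    K.norm_sub_sq_eq_norm_sub_starProjection_sq_add x hk]
  exact le_add_of_nonneg_right (sq_nonneg _)

theorem eq_starProjection_of_norm_sub_le (hk : k ∈ K)
    (h : ‖x - k‖ ≤ ‖x - K.starProjection x‖) : k = K.starProjection x := by
  rw [← sq_le_sq₀ (norm_nonneg _) (norm_nonneg _),
    K.norm_sub_sq_eq_norm_sub_starProjection_sq_add x hk] at h
  have : ‖K.starProjection x - k‖ = 0 := by nlinarith [norm_nonneg (K.starProjection x - k)]
  exact (sub_eq_zero.1 (norm_eq_zero.1 this)).symm

end Submodule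

namespace AffineSubspace

variable {V P : Type*} [NormedAddCommGroup V] [InnerProductSpace ℝ V] [MetricSpace P]
  [NormedAddTorsor V P]

theorem exists_closest_pair_of_disjoint_direction {s₁ s₂ : AffineSubspace ℝ P}
    [FiniteDimensional ℝ s₁.direction] [FiniteDimensional ℝ s₂.direction]
    (hd : Disjoint s₁.direction s₂.direction) {p₁ p₂ : P} (hp₁ : p₁ ∈ s₁) (hp₂ : p₂ ∈ s₂) :
    ∃ A ∈ s₁, ∃ B ∈ s₂, ∀ a ∈ s₁, ∀ b ∈ s₂,
      dist A B ≤ dist a b ∧ (dist a b ≤ dist A B → a = A ∧ b = B) := by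
  set K := s₁.direction ⊔ s₂.direction
  have hdist (a b : P) : dist a b = ‖(p₁ -ᵥ p₂) - ((b -ᵥ p₂) - (a -ᵥ p₁))‖ := by
    rw [dist_eq_norm_vsub V, ← vsub_sub_vsub_cancel_right a b p₂, ← vsub_add_vsub_cancel a p₁ p₂]
    abel_nf
  set x := p₁ -ᵥ p₂
  have hmem : ∀ a ∈ s₁, ∀ b ∈ s₂, (b -ᵥ p₂) - (a -ᵥ p₁) ∈ K := fun a ha b hb =>
    K.sub_mem (Submodule.mem_sup_right (vsub_mem_direction hb hp₂))
      (Submodule.mem_sup_left (vsub_mem_direction ha hp₁))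
  obtain ⟨e₁, he₁, e₂, he₂, he⟩ := Submodule.mem_sup.1 (K.starProjection_apply_mem x)
  refine ⟨-e₁ +ᵥ p₁, vadd_mem_of_mem_direction (neg_mem he₁) hp₁,
    e₂ +ᵥ p₂, vadd_mem_of_mem_direction he₂ hp₂, fun a ha b hb => ?_⟩
  have hAB : dist (-e₁ +ᵥ p₁) (e₂ +ᵥ p₂) = ‖x - K.starProjection x‖ := by
    rw [hdist, vadd_vsub, vadd_vsub, sub_neg_eq_add, add_comm, he]
  rw [hAB, hdist]
  refine ⟨K.norm_sub_starProjection_le x (hmem a ha b hb), fun h => ?_⟩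
  have hk := K.eq_starProjection_of_norm_sub_le x (hmem a ha b hb) h
  have h0 : b -ᵥ p₂ - e₂ = a -ᵥ p₁ + e₁ := by
    rw [← he] at hk
    linear_combination (norm := module) hk
  have hzero := Submodule.disjoint_def.1 hd _
    (s₁.direction.add_mem (vsub_mem_direction ha hp₁) he₁)
    (h0 ▸ s₂.direction.sub_mem (vsub_mem_direction hb hp₂) he₂)
  exact ⟨(eq_vadd_iff_vsub_eq _ _ _).2 (eq_neg_of_add_eq_zero_left hzero),
    (eq_vadd_iff_vsub_eq _ _ _).2 (sub_eq_zero.1 (h0.trans hzero))⟩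

end AffineSubspace

section StrictConvex

variable {E : Type*} [NormedAddCommGroup E] [NormedSpace ℝ E] [StrictConvexSpace ℝ E]

theorem eq_midpoint_of_dist_le_half {x y z : E} (hx : dist x y ≤ dist x z / 2)
    (hz : dist y z ≤ dist x z / 2) : y = midpoint ℝ x z := by
  have := dist_triangle x y z
  exact eq_midpoint_of_dist_eq_half (by linarith) (by linarith)

theorem inter_infDist_le_eq_singleton_midpoint [ProperSpace E] {S T : Set E}
    (hS : IsClosed S) (hT : IsClosed T) {A B : E} (hA : A ∈ S) (hB : B ∈ T) {r : ℝ}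
    (hAB : dist A B = 2 * r) (huniq : ∀ a ∈ S, ∀ b ∈ T, dist a b ≤ 2 * r → a = A ∧ b = B) :
    {p | infDist p S ≤ r} ∩ {p | infDist p T ≤ r} = {midpoint ℝ A B} := by
  refine Set.eq_singleton_iff_unique_mem.2 ⟨⟨?_, ?_⟩, ?_⟩
  · calc infDist (midpoint ℝ A B) S ≤ dist (midpoint ℝ A B) A := infDist_le_dist_of_mem hA
      _ = r := by rw [dist_midpoint_left, hAB]; norm_num; ring
  · calc infDist (midpoint ℝ A B) T ≤ dist (midpoint ℝ A B) B := infDist_le_dist_of_mem hB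
      _ = r := by rw [dist_midpoint_right, hAB]; norm_num; ring
  · rintro q ⟨hqS, hqT⟩
    obtain ⟨a, ha, hqa⟩ := hS.exists_infDist_eq_dist ⟨A, hA⟩ q
    obtain ⟨b, hb, hqb⟩ := hT.exists_infDist_eq_dist ⟨B, hB⟩ q
    replace hqS : dist q a ≤ r := hqa ▸ hqS
    replace hqT : dist q b ≤ r := hqb ▸ hqT
    obtain ⟨rfl, rfl⟩ := huniq a ha b hb <| by linarith [dist_triangle_left a b q]
    exact eq_midpoint_of_dist_le_half (by rw [dist_comm]; linarith) (by linarith)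

end StrictConvex

theorem Submodule.disjoint_span_singleton_of_ne {K M : Type*} [Field K] [AddCommGroup M]
    [Module K M] {w v : M} (hv : v ≠ 0) (h : K ∙ w ≠ K ∙ v) : Disjoint (K ∙ w) (K ∙ v) := by
  refine disjoint_span_singleton_of_notMem fun hvw => h ?_
  obtain ⟨a, rfl⟩ := mem_span_singleton.1 hvw
  exact (span_singleton_smul_eq (isUnit_iff_ne_zero.2 (left_ne_zero_of_smul hv)) w).symm

local notation "E3" => EuclideanSpace ℝ (Fin 3)

theorem lineThrough_eq_mk' (P w : E3) :
    lineThrough P w = AffineSubspace.mk' P (ℝ ∙ w) := by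
  ext q
  simp only [lineThrough, Set.mem_range, SetLike.mem_coe, AffineSubspace.mem_mk',
    Submodule.mem_span_singleton, vsub_eq_sub, eq_sub_iff_add_eq', eq_comm]

theorem setDist_eq_dist_of_forall_le {s t : Set E3} {A B : E3} (hA : A ∈ s) (hB : B ∈ t)
    (h : ∀ a ∈ s, ∀ b ∈ t, dist A B ≤ dist a b) : setDist s t = dist A B :=
  IsLeast.csInf_eq ⟨Set.mem_image2_of_mem hA hB, Set.forall_mem_image2.2 h⟩

/-- Two non-parallel lines (their direction subspaces differ, i.e. their direction
vectors are linearly independent) at distance 2 have unit cylinders touching in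
exactly one point. -/
theorem nonparallel_touching_cylinders_intersect_in_singleton
    (ℓ m : Set (EuclideanSpace ℝ (Fin 3))) (hℓ : IsLine ℓ) (hm : IsLine m)
    (hnp : vectorSpan ℝ ℓ ≠ vectorSpan ℝ m)
    (hd : setDist ℓ m = 2) :
    ∃ p : EuclideanSpace ℝ (Fin 3), closedCylinder ℓ ∩ closedCylinder m = {p} := by
  obtain ⟨P, w, -, rfl⟩ := hℓ
  obtain ⟨Q, v, hv, rfl⟩ := hm
  rw [lineThrough_eq_mk', lineThrough_eq_mk'] at hnp hd ⊢
  set L := AffineSubspace.mk' P (ℝ ∙ w)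
  set M := AffineSubspace.mk' Q (ℝ ∙ v)
  have hdisj : Disjoint L.direction M.direction := by
    change L.direction ≠ M.direction at hnp
    rw [AffineSubspace.direction_mk', AffineSubspace.direction_mk'] at hnp ⊢
    exact Submodule.disjoint_span_singleton_of_ne hv hnp
  obtain ⟨A, hA, B, hB, hclosest⟩ :=
    AffineSubspace.exists_closest_pair_of_disjoint_direction hdisj
      (AffineSubspace.self_mem_mk' P _) (AffineSubspace.self_mem_mk' Q _)
  rw [setDist_eq_dist_of_forall_le hA hB fun a ha b hb => (hclosest a ha b hb).1] at hd
  exact ⟨midpoint ℝ A B, inter_infDist_le_eq_singleton_midpoint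
    L.closed_of_finiteDimensional M.closed_of_finiteDimensional hA hB (by rw [hd]; norm_num)
    fun a ha b hb hab => (hclosest a ha b hb).2 (by linarith)⟩
end
end

section
/- Let S be a finite set of pairwise distinct lines in ℝ³ such that the distance between any two distinct lines of S is exactly 2, and suppose S contains two distinct parallel lines. Then S has at most 4 elements. (If two of the mutually touching unit cylinders are parallel, then the maximum number of mutually touching cylinders is four.) -/
/-!
Put the two parallel lines at `P₁ + ℝ e₀` and `P₁ + 2 e₁ + ℝ e₀` for an orthonormal frame
`(e₀, e₁, e₂)`, and call `⟪e₂, Q - P₁⟫` the height of a point `Q`. A further line at distance `2`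
from both is either parallel to them, and then its height is `±√3`, or skew to them: then a unit
common normal `n` of it and `e₀` satisfies `|⟪n, Q - P₁⟫| = |⟪n, Q - P₁ - 2 e₁⟫| = 2` while
`|⟪n, 2 e₁⟫| ≤ 2`, which forces `n ⊥ e₁`, so `n = ±e₂`, the line is parallel to the plane `e₂ᗮ`
and its height is `±2`.

So all further lines are parallel to `e₂ᗮ`, with heights `h` in the two bands `3 ≤ h² ≤ 4`.
Two such heights at most `2` apart lie in the same band, hence are less than `1` apart. Two
non-parallel further lines would be at distance `|h - h'| ≠ 2`. Three parallel ones project, along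
their direction and `e₂`, to three points of a line whose mutual distances `√(4 - (h - h')²)` lie in
`[√3, 2]`: the same band argument applied to these differences shows this is impossible.
-/

noncomputable section

local notation "E³" => EuclideanSpace ℝ (Fin 3)

open scoped RealInnerProductSpace

open InnerProductSpace in
lemma exists_unit_inner_eq_zero (w v : E³) : ∃ n : E³, ‖n‖ = 1 ∧ ⟪n, w⟫ = 0 ∧ ⟪n, v⟫ = 0 := by
  have h3 : Module.finrank ℝ E³ = Fintype.card (Fin 3) := by simp
  let b := gramSchmidtOrthonormalBasis h3 ![w, v, 0]
  exact ⟨b 2, b.norm_eq_one 2,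
    gramSchmidtOrthonormalBasis_inv_triangular _ _ (by decide : (0 : Fin 3) < 2),
    gramSchmidtOrthonormalBasis_inv_triangular _ _ (by decide : (1 : Fin 3) < 2)⟩

open InnerProductSpace in
lemma exists_orthonormalBasis_fin_three {u e : E³} (hu : u ≠ 0) (he : e ≠ 0) (hue : ⟪u, e⟫ = 0) :
    ∃ b : OrthonormalBasis (Fin 3) ℝ E³, b 0 = ‖u‖⁻¹ • u ∧ b 1 = ‖e‖⁻¹ • e := by
  have hf : Pairwise fun i j => ⟪![u, e, 0] i, ![u, e, 0] j⟫ = 0 := by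
    intro i j hij
    fin_cases i <;> fin_cases j <;> simp_all [real_inner_comm]
  have h3 : Module.finrank ℝ E³ = Fintype.card (Fin 3) := by simp
  exact ⟨gramSchmidtOrthonormalBasis h3 ![u, e, 0],
    gramSchmidtOrthonormalBasis_apply_of_orthogonal _ hf hu,
    gramSchmidtOrthonormalBasis_apply_of_orthogonal _ hf he⟩

lemma setDist_lineThrough_le (P w Q v : E³) (s t : ℝ) :
    setDist (lineThrough P w) (lineThrough Q v) ≤ ‖(P + s • w) - (Q + t • v)‖ :=
  csInf_le ⟨0, by rintro _ ⟨_, -, _, -, rfl⟩; exact dist_nonneg⟩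
    ⟨_, ⟨s, rfl⟩, _, ⟨t, rfl⟩, dist_eq_norm _ _⟩

lemma le_setDist_lineThrough {P w Q v : E³} {c : ℝ}
    (h : ∀ s t : ℝ, c ≤ ‖(P + s • w) - (Q + t • v)‖) :
    c ≤ setDist (lineThrough P w) (lineThrough Q v) :=
  le_csInf ((Set.range_nonempty _).image2 (Set.range_nonempty _)) <| by
    rintro _ ⟨_, ⟨s, rfl⟩, _, ⟨t, rfl⟩, rfl⟩
    rw [dist_eq_norm]
    exact h s t

lemma lineThrough_smul (P w : E³) {a : ℝ} (ha : a ≠ 0) :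
    lineThrough P (a • w) = lineThrough P w := by
  ext x
  constructor
  · rintro ⟨s, rfl⟩
    exact ⟨s * a, by simp [smul_smul]⟩
  · rintro ⟨s, rfl⟩
    exact ⟨s / a, by simp [smul_smul, div_mul_cancel₀ _ ha]⟩

lemma lineThrough_add_smul (P w : E³) (a : ℝ) : lineThrough (P + a • w) w = lineThrough P w := by
  ext x
  constructor
  · rintro ⟨s, rfl⟩
    exact ⟨a + s, by simp [add_smul, add_assoc]⟩
  · rintro ⟨s, rfl⟩
    exact ⟨s - a, by simp [sub_smul, add_assoc]⟩

lemma lineThrough_eq_of_mem_span {Q v w : E³} (hv : v ∈ Submodule.span ℝ {w}) (hv₀ : v ≠ 0) :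
    lineThrough Q v = lineThrough Q w := by
  obtain ⟨a, rfl⟩ := Submodule.mem_span_singleton.mp hv
  exact lineThrough_smul Q w (left_ne_zero_of_smul hv₀)

lemma vectorSpan_lineThrough (P w : E³) :
    vectorSpan ℝ (lineThrough P w) = Submodule.span ℝ {w} := by
  apply le_antisymm
  · rw [vectorSpan_def, Submodule.span_le]
    rintro _ ⟨_, ⟨s, rfl⟩, _, ⟨t, rfl⟩, rfl⟩
    change P + s • w -ᵥ (P + t • w) ∈ _
    rw [vsub_eq_sub, show P + s • w - (P + t • w) = (s - t) • w by module]
    exact Submodule.smul_mem _ _ (Submodule.mem_span_singleton_self w)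
  · rw [Submodule.span_le, Set.singleton_subset_iff]
    simpa using vsub_mem_vectorSpan ℝ (show P + (1 : ℝ) • w ∈ lineThrough P w from ⟨1, rfl⟩)
      (show P + (0 : ℝ) • w ∈ lineThrough P w from ⟨0, rfl⟩)

lemma setDist_lineThrough_eq_sqrt (b : OrthonormalBasis (Fin 3) ℝ E³) (P Q : E³) :
    setDist (lineThrough P (b 0)) (lineThrough Q (b 0)) =
      √(⟪b 1, P - Q⟫ ^ 2 + ⟪b 2, P - Q⟫ ^ 2) := by
  have hnorm (r : ℝ) : ‖P - Q + r • b 0‖ =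
      √((⟪b 0, P - Q⟫ + r) ^ 2 + (⟪b 1, P - Q⟫ ^ 2 + ⟪b 2, P - Q⟫ ^ 2)) := by
    rw [← Real.sqrt_sq (norm_nonneg (P - Q + r • b 0)), ← b.sum_sq_inner_right,
      Fin.sum_univ_three]
    simp [inner_add_right, inner_smul_right, b.inner_eq_ite, add_assoc]
  apply le_antisymm
  · calc _ ≤ ‖(P + (-⟪b 0, P - Q⟫) • b 0) - (Q + (0 : ℝ) • b 0)‖ := setDist_lineThrough_le ..
      _ = _ := by
        rw [show (P + (-⟪b 0, P - Q⟫) • b 0) - (Q + (0 : ℝ) • b 0)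
          = P - Q + (-⟪b 0, P - Q⟫) • b 0 by module, hnorm]
        simp
  · refine le_setDist_lineThrough fun s t => ?_
    rw [show P + s • b 0 - (Q + t • b 0) = P - Q + (s - t) • b 0 by module, hnorm]
    exact Real.sqrt_le_sqrt (le_add_of_nonneg_left (sq_nonneg _))

lemma setDist_lineThrough_of_linearIndependent {P w Q v n : E³}
    (hwv : LinearIndependent ℝ ![w, v]) (hn : ‖n‖ = 1) (hnw : ⟪n, w⟫ = 0) (hnv : ⟪n, v⟫ = 0) :
    setDist (lineThrough P w) (lineThrough Q v) = |⟪n, P - Q⟫| := by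
  apply le_antisymm
  · have hplane : Submodule.span ℝ {w, v} = (ℝ ∙ n)ᗮ := by
      apply Submodule.eq_of_le_of_finrank_eq
      · rw [Submodule.span_le]
        rintro _ (rfl | rfl) <;>
          simpa [Submodule.mem_orthogonal_singleton_iff_inner_right]
      · have h2 := finrank_span_eq_card hwv
        have h3 := Submodule.finrank_add_finrank_orthogonal (ℝ ∙ n)
        rw [finrank_span_singleton (norm_ne_zero_iff.mp (hn.trans_ne one_ne_zero)),
          finrank_euclideanSpace_fin] at h3
        rw [Matrix.range_cons_cons_empty, Fintype.card_fin] at h2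
        omega
    have hmem : P - Q - ⟪n, P - Q⟫ • n ∈ Submodule.span ℝ {w, v} := by
      rw [hplane, Submodule.mem_orthogonal_singleton_iff_inner_right, inner_sub_right,
        inner_smul_right, real_inner_self_eq_norm_sq, hn]
      ring
    obtain ⟨a, c, hac⟩ := Submodule.mem_span_pair.mp hmem
    calc _ ≤ ‖(P + (-a) • w) - (Q + c • v)‖ := setDist_lineThrough_le ..
      _ = ‖⟪n, P - Q⟫ • n‖ := by
        rw [show (P + (-a) • w) - (Q + c • v) = P - Q - (a • w + c • v) by module, hac,
          sub_sub_cancel]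
      _ = _ := by rw [norm_smul, hn, mul_one, Real.norm_eq_abs]
  · refine le_setDist_lineThrough fun s t => ?_
    calc |⟪n, P - Q⟫| = |⟪n, (P + s • w) - (Q + t • v)⟫| := by
          rw [show (P + s • w) - (Q + t • v) = P - Q + s • w - t • v by module]
          simp [inner_add_right, inner_sub_right, inner_smul_right, hnw, hnv]
      _ ≤ ‖n‖ * ‖(P + s • w) - (Q + t • v)‖ := abs_real_inner_le_norm _ _
      _ = _ := by rw [hn, one_mul]

lemma sq_sub_le_one_of_sq_mem_Icc {a b : ℝ} (ha : a ^ 2 ∈ Set.Icc 3 4)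
    (hb : b ^ 2 ∈ Set.Icc 3 4) (hab : (a - b) ^ 2 ≤ 4) : (a - b) ^ 2 ≤ 1 := by
  obtain ⟨ha₃, ha₄⟩ := ha
  obtain ⟨hb₃, hb₄⟩ := hb
  have hprod : 3 ≤ a * b := by nlinarith [sq_nonneg (a * b - 3)]
  have hsum : 12 ≤ (a + b) ^ 2 := by nlinarith
  nlinarith [sq_nonneg (a - b)]

lemma inner_sub_sub_inner_sub (n A B P : E³) : ⟪n, A - P⟫ - ⟪n, B - P⟫ = ⟪n, A - B⟫ := by
  rw [← inner_sub_right, sub_sub_sub_cancel_right]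

lemma setDist_ne_two_of_linearIndependent {P Q Q' v v' n : E³}
    (hvv' : LinearIndependent ℝ ![v, v']) (hn : ‖n‖ = 1) (hnv : ⟪n, v⟫ = 0) (hnv' : ⟪n, v'⟫ = 0)
    (hQ : ⟪n, Q - P⟫ ^ 2 ∈ Set.Icc 3 4) (hQ' : ⟪n, Q' - P⟫ ^ 2 ∈ Set.Icc 3 4) :
    setDist (lineThrough Q v) (lineThrough Q' v') ≠ 2 := by
  intro h
  rw [setDist_lineThrough_of_linearIndependent hvv' hn hnv hnv',
    ← inner_sub_sub_inner_sub n Q Q' P] at h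
  have h4 : (⟪n, Q - P⟫ - ⟪n, Q' - P⟫) ^ 2 = 4 := by rw [← sq_abs, h]; norm_num
  linarith [sq_sub_le_one_of_sq_mem_Icc hQ hQ' h4.le]

lemma not_pairwise_setDist_eq_two_of_parallel {P u n Q₁ Q₂ Q₃ : E³} (hu : u ≠ 0)
    (hn : ‖n‖ = 1) (hnu : ⟪n, u⟫ = 0) (hQ₁ : ⟪n, Q₁ - P⟫ ^ 2 ∈ Set.Icc 3 4)
    (hQ₂ : ⟪n, Q₂ - P⟫ ^ 2 ∈ Set.Icc 3 4) (hQ₃ : ⟪n, Q₃ - P⟫ ^ 2 ∈ Set.Icc 3 4) :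
    ¬ (setDist (lineThrough Q₁ u) (lineThrough Q₂ u) = 2 ∧
      setDist (lineThrough Q₂ u) (lineThrough Q₃ u) = 2 ∧
      setDist (lineThrough Q₁ u) (lineThrough Q₃ u) = 2) := by
  rintro ⟨h₁₂, h₂₃, h₁₃⟩
  obtain ⟨b, hb₀, hb₁⟩ := exists_orthonormalBasis_fin_three hu
    (norm_ne_zero_iff.mp (hn.trans_ne one_ne_zero)) (by rwa [real_inner_comm])
  rw [hn, inv_one, one_smul] at hb₁
  have hline (Q : E³) : lineThrough Q u = lineThrough Q (b 0) := by
    rw [hb₀, lineThrough_smul Q u (inv_ne_zero (norm_ne_zero_iff.mpr hu))]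
  have hgap {Q Q' : E³} (hQ : ⟪n, Q - P⟫ ^ 2 ∈ Set.Icc 3 4) (hQ' : ⟪n, Q' - P⟫ ^ 2 ∈ Set.Icc 3 4)
      (h : setDist (lineThrough Q u) (lineThrough Q' u) = 2) :
      ⟪b 2, Q - Q'⟫ ^ 2 ∈ Set.Icc 3 4 := by
    rw [hline, hline, setDist_lineThrough_eq_sqrt, hb₁,
      Real.sqrt_eq_iff_eq_sq (by positivity) zero_le_two] at h
    have hn₁ := sq_sub_le_one_of_sq_mem_Icc hQ hQ'
      (by rw [inner_sub_sub_inner_sub]; linarith [sq_nonneg ⟪b 2, Q - Q'⟫])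
    rw [inner_sub_sub_inner_sub] at hn₁
    constructor <;> linarith [sq_nonneg ⟪n, Q - Q'⟫]
  have h₁₃' := hgap hQ₁ hQ₃ h₁₃
  have h := sq_sub_le_one_of_sq_mem_Icc (hgap hQ₁ hQ₂ h₁₂)
    (neg_sq ⟪b 2, Q₂ - Q₃⟫ ▸ hgap hQ₂ hQ₃ h₂₃)
  rw [sub_neg_eq_add, ← inner_add_right, sub_add_sub_cancel] at h
  linarith [h₁₃'.1, h h₁₃'.2]

lemma card_le_two_of_pairwise_setDist_eq_two {T : Finset (Set E³)} {P n : E³} (hn : ‖n‖ = 1)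
    (hT : ∀ m ∈ T, ∃ Q v, v ≠ 0 ∧ m = lineThrough Q v ∧ ⟪n, v⟫ = 0 ∧
      ⟪n, Q - P⟫ ^ 2 ∈ Set.Icc 3 4)
    (hdist : ∀ ℓ ∈ T, ∀ m ∈ T, ℓ ≠ m → setDist ℓ m = 2) :
    T.card ≤ 2 := by
  by_contra! hcard
  obtain ⟨_, h₁, _, h₂, _, h₃, h₁₂, h₁₃, h₂₃⟩ := Finset.two_lt_card.mp hcard
  obtain ⟨Q₁, v₁, hv₁, rfl, hnv₁, hQ₁⟩ := hT _ h₁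
  obtain ⟨Q₂, v₂, hv₂, rfl, hnv₂, hQ₂⟩ := hT _ h₂
  obtain ⟨Q₃, v₃, hv₃, rfl, hnv₃, hQ₃⟩ := hT _ h₃
  have hdir {Q v : E³} (hm : lineThrough Q v ∈ T) (hv : v ≠ 0) (hnv : ⟪n, v⟫ = 0)
      (hQ : ⟪n, Q - P⟫ ^ 2 ∈ Set.Icc 3 4) (hne : lineThrough Q₁ v₁ ≠ lineThrough Q v) :
      lineThrough Q v = lineThrough Q v₁ := by
    refine lineThrough_eq_of_mem_span ?_ hv
    by_contra hspan
    have hind : LinearIndependent ℝ ![v₁, v] := (LinearIndependent.pair_iff' hv₁).mpr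
      fun a ha => hspan (Submodule.mem_span_singleton.mpr ⟨a, ha⟩)
    exact setDist_ne_two_of_linearIndependent hind hn hnv₁ hnv hQ₁ hQ (hdist _ h₁ _ hm hne)
  have d₁₂ := hdist _ h₁ _ h₂ h₁₂
  have d₂₃ := hdist _ h₂ _ h₃ h₂₃
  have d₁₃ := hdist _ h₁ _ h₃ h₁₃
  rw [hdir h₂ hv₂ hnv₂ hQ₂ h₁₂] at d₁₂ d₂₃
  rw [hdir h₃ hv₃ hnv₃ hQ₃ h₁₃] at d₂₃ d₁₃
  exact not_pairwise_setDist_eq_two_of_parallel hv₁ hn hnv₁ hQ₁ hQ₂ hQ₃ ⟨d₁₂, d₂₃, d₁₃⟩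

section ParallelPair

variable {b : OrthonormalBasis (Fin 3) ℝ E³} {P₁ P₂ Q v : E³}

lemma inner_sub_eq_of_sub_eq_two_smul (hP : P₂ - P₁ = (2 : ℝ) • b 1) (x : E³) :
    ⟪x, Q - P₂⟫ = ⟪x, Q - P₁⟫ - 2 * ⟪x, b 1⟫ := by
  rw [show Q - P₂ = Q - P₁ - (2 : ℝ) • b 1 by rw [← hP]; abel, inner_sub_right, inner_smul_right]

lemma height_sq_eq_three_of_parallel (hP : P₂ - P₁ = (2 : ℝ) • b 1)
    (h₁ : setDist (lineThrough Q (b 0)) (lineThrough P₁ (b 0)) = 2)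
    (h₂ : setDist (lineThrough Q (b 0)) (lineThrough P₂ (b 0)) = 2) :
    ⟪b 2, Q - P₁⟫ ^ 2 = 3 := by
  rw [setDist_lineThrough_eq_sqrt, Real.sqrt_eq_iff_eq_sq (by positivity) zero_le_two] at h₁ h₂
  rw [inner_sub_eq_of_sub_eq_two_smul hP, inner_sub_eq_of_sub_eq_two_smul hP, b.inner_eq_one,
    b.inner_eq_zero (by decide)] at h₂
  nlinarith

lemma inner_eq_zero_and_height_sq_eq_four_of_linearIndependent (hP : P₂ - P₁ = (2 : ℝ) • b 1)
    (hv : LinearIndependent ℝ ![v, b 0])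
    (h₁ : setDist (lineThrough Q v) (lineThrough P₁ (b 0)) = 2)
    (h₂ : setDist (lineThrough Q v) (lineThrough P₂ (b 0)) = 2) :
    ⟪b 2, v⟫ = 0 ∧ ⟪b 2, Q - P₁⟫ ^ 2 = 4 := by
  obtain ⟨n, hn, hnv, hnb₀⟩ := exists_unit_inner_eq_zero v (b 0)
  rw [setDist_lineThrough_of_linearIndependent hv hn hnv hnb₀] at h₁ h₂
  rw [inner_sub_eq_of_sub_eq_two_smul hP] at h₂
  have hA : ⟪n, Q - P₁⟫ ^ 2 = 4 := by rw [← sq_abs, h₁]; norm_num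
  have hB : (⟪n, Q - P₁⟫ - 2 * ⟪n, b 1⟫) ^ 2 = 4 := by rw [← sq_abs, h₂]; norm_num
  -- `|⟪n, P₂ - P₁⟫| ≤ ‖P₂ - P₁‖ = 2` leaves no room for the two heights to differ
  have hnb₁ : ⟪n, b 1⟫ = 0 := by
    have hc : ⟪n, b 1⟫ ^ 2 ≤ 1 := by
      simpa [hn] using abs_real_inner_le_norm n (b 1)
    have hfac : ⟪n, b 1⟫ * (⟪n, b 1⟫ - ⟪n, Q - P₁⟫) = 0 := by linear_combination (hB - hA) / 4
    rcases mul_eq_zero.mp hfac with h | h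
    · exact h
    · nlinarith [sub_eq_zero.mp h]
  obtain ⟨σ, rfl⟩ : ∃ σ : ℝ, n = σ • b 2 := ⟨⟪b 2, n⟫, by
    conv_lhs => rw [← b.sum_repr' n]
    simp [Fin.sum_univ_three, real_inner_comm, hnb₀, hnb₁]⟩
  rw [norm_smul, b.norm_eq_one, mul_one, Real.norm_eq_abs] at hn
  rw [real_inner_smul_left] at hnv h₁
  rw [abs_mul, hn, one_mul] at h₁
  refine ⟨(mul_eq_zero.mp hnv).resolve_left fun h => by simp [h] at hn, ?_⟩
  rw [← sq_abs, h₁]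
  norm_num

lemma inner_eq_zero_and_height_sq_mem_Icc (hP : P₂ - P₁ = (2 : ℝ) • b 1) (hv : v ≠ 0)
    (h₁ : setDist (lineThrough Q v) (lineThrough P₁ (b 0)) = 2)
    (h₂ : setDist (lineThrough Q v) (lineThrough P₂ (b 0)) = 2) :
    ⟪b 2, v⟫ = 0 ∧ ⟪b 2, Q - P₁⟫ ^ 2 ∈ Set.Icc 3 4 := by
  by_cases hspan : v ∈ Submodule.span ℝ {b 0}
  · rw [lineThrough_eq_of_mem_span hspan hv] at h₁ h₂
    obtain ⟨a, rfl⟩ := Submodule.mem_span_singleton.mp hspan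
    refine ⟨by simp [inner_smul_right], ?_⟩
    rw [height_sq_eq_three_of_parallel hP h₁ h₂]
    norm_num
  · have hind : LinearIndependent ℝ ![v, b 0] := LinearIndependent.pair_symm_iff.mp <|
      (LinearIndependent.pair_iff' (b.orthonormal.ne_zero 0)).mpr fun a ha =>
        hspan (Submodule.mem_span_singleton.mpr ⟨a, ha⟩)
    obtain ⟨hbv, hQ⟩ := inner_eq_zero_and_height_sq_eq_four_of_linearIndependent hP hind h₁ h₂
    exact ⟨hbv, by rw [hQ]; norm_num⟩

end ParallelPair

lemma exists_orthonormalBasis_of_parallel {ℓ₁ ℓ₂ : Set E³} (h₁ : IsLine ℓ₁) (h₂ : IsLine ℓ₂)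
    (hspan : vectorSpan ℝ ℓ₁ = vectorSpan ℝ ℓ₂) (hd : setDist ℓ₁ ℓ₂ = 2) :
    ∃ (b : OrthonormalBasis (Fin 3) ℝ E³) (P₁ P₂ : E³),
      ℓ₁ = lineThrough P₁ (b 0) ∧ ℓ₂ = lineThrough P₂ (b 0) ∧ P₂ - P₁ = (2 : ℝ) • b 1 := by
  obtain ⟨P₁, w, hw, rfl⟩ := h₁
  obtain ⟨P, w₂, hw₂, rfl⟩ := h₂
  rw [vectorSpan_lineThrough, vectorSpan_lineThrough] at hspan
  rw [lineThrough_eq_of_mem_span (hspan ▸ Submodule.mem_span_singleton_self w₂) hw₂,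
    ← lineThrough_add_smul P w (-(⟪w, P - P₁⟫ / ⟪w, w⟫))] at hd ⊢
  have horth : ⟪w, P + (-(⟪w, P - P₁⟫ / ⟪w, w⟫)) • w - P₁⟫ = 0 := by
    have hww : ⟪w, w⟫ ≠ 0 := inner_self_ne_zero.mpr hw
    rw [show P + (-(⟪w, P - P₁⟫ / ⟪w, w⟫)) • w - P₁ = P - P₁ + (-(⟪w, P - P₁⟫ / ⟪w, w⟫)) • w
      by abel, inner_add_right, inner_smul_right]
    field_simp
    ring
  set P₂ := P + (-(⟪w, P - P₁⟫ / ⟪w, w⟫)) • w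
  have hne : P₂ - P₁ ≠ 0 := by
    intro h
    have := setDist_lineThrough_le P₁ w P₁ w 0 0
    rw [sub_eq_zero.mp h] at hd
    simp only [zero_smul, add_zero, sub_self, norm_zero] at this
    linarith
  obtain ⟨b, hb₀, hb₁⟩ := exists_orthonormalBasis_fin_three hw hne horth
  have hline (Q : E³) : lineThrough Q w = lineThrough Q (b 0) := by
    rw [hb₀, lineThrough_smul Q w (inv_ne_zero (norm_ne_zero_iff.mpr hw))]
  have he : P₂ - P₁ = ‖P₂ - P₁‖ • b 1 := by
    rw [hb₁, smul_inv_smul₀ (norm_ne_zero_iff.mpr hne)]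
  refine ⟨b, P₁, P₂, hline P₁, hline P₂, ?_⟩
  have hsq : ⟪b 1, -(‖P₂ - P₁‖ • b 1)⟫ ^ 2 + ⟪b 2, -(‖P₂ - P₁‖ • b 1)⟫ ^ 2 = ‖P₂ - P₁‖ ^ 2 := by
    simp [inner_smul_right]
  rw [hline, hline, setDist_lineThrough_eq_sqrt, ← neg_sub, he, hsq,
    Real.sqrt_sq (norm_nonneg _)] at hd
  rw [he, hd]

/-- If a finite family of pairwise distinct lines in ℝ³ has all pairwise distances
equal to 2 and contains two distinct parallel lines, then it has at most 4 members:
if two of the mutually touching unit cylinders are parallel, the maximum number of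
mutually touching cylinders is four. -/
theorem card_le_four_of_parallel_pair
    (S : Finset (Set (EuclideanSpace ℝ (Fin 3))))
    (hline : ∀ ℓ ∈ S, IsLine ℓ)
    (hdist : ∀ ℓ ∈ S, ∀ m ∈ S, ℓ ≠ m → setDist ℓ m = 2)
    (hpar : ∃ ℓ ∈ S, ∃ m ∈ S, ℓ ≠ m ∧ vectorSpan ℝ ℓ = vectorSpan ℝ m) :
    S.card ≤ 4 := by
  obtain ⟨ℓ₁, h₁, ℓ₂, h₂, hne, hspan⟩ := hpar
  obtain ⟨b, P₁, P₂, rfl, rfl, hP⟩ :=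
    exists_orthonormalBasis_of_parallel (hline _ h₁) (hline _ h₂) hspan (hdist _ h₁ _ h₂ hne)
  have hrest : ((S.erase (lineThrough P₁ (b 0))).erase (lineThrough P₂ (b 0))).card ≤ 2 := by
    refine card_le_two_of_pairwise_setDist_eq_two (P := P₁) (b.norm_eq_one 2) ?_ ?_
    · intro m hm
      obtain ⟨hm₂, hm₁, hm⟩ : m ≠ _ ∧ m ≠ _ ∧ m ∈ S := by simpa using hm
      obtain ⟨Q, v, hv, rfl⟩ := hline m hm
      exact ⟨Q, v, hv, rfl, inner_eq_zero_and_height_sq_mem_Icc hP hv (hdist _ hm _ h₁ hm₁)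
        (hdist _ hm _ h₂ hm₂)⟩
    · exact fun ℓ hℓ m hm => hdist ℓ (Finset.mem_of_mem_erase (Finset.mem_of_mem_erase hℓ))
        m (Finset.mem_of_mem_erase (Finset.mem_of_mem_erase hm))
  rw [Finset.card_erase_of_mem (Finset.mem_erase.mpr ⟨hne.symm, h₂⟩),
    Finset.card_erase_of_mem h₁] at hrest
  omega
end
end

section
/- Let ℓ₁ be the line in ℝ³ through (0, 0, −1) with direction (1, 0, 0), and let x, y, t, u be real numbers with (u, 1 − t − u) ≠ (0, 0) (so that the direction (t, u, 1 − t − u) is nonzero and not parallel to (1, 0, 0)). Let ℓ be the line through (x, y, 0) with direction (t, u, 1 − t − u). Then the distance between ℓ₁ and ℓ equals 2 if and only if y²t² + 2y²tu − 2y²t + y²u² − 2y²u + y² + 2ytu + 2yu² − 2yu − 4t² − 8tu + 8t − 7u² + 8u − 4 = 0. -/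
noncomputable section

/-! The line `ℓ₁` is `{(s, 0, -1)}`, and the squared distance from `(s, 0, -1)` to
`(x + r t, y + r u, z + r c)` splits as `(s - x - r t)² + ((y + r u)² + (z + 1 + r c)²)`. The first
term can be made zero by the choice of `s`, and the second is the squared distance from the origin
to a line in the plane, whose minimum `(u (z + 1) - c y)² / (u² + c²)` over `r` is read off from
Lagrange's identity. With `z = 0` and `c = 1 - t - u`, the distance is `2` exactly when
`(u - c y)² = 4 (u² + c²)`, which expands to the polynomial equation of the theorem. -/

theorem vec3_add_smul (a b c d e f s : ℝ) :
    vec3 a b c + s • vec3 d e f = vec3 (a + s * d) (b + s * e) (c + s * f) := by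
  ext i; fin_cases i <;> simp [vec3]

theorem dist_vec3 (a b c a' b' c' : ℝ) :
    dist (vec3 a b c) (vec3 a' b' c') = √((a - a') ^ 2 + (b - b') ^ 2 + (c - c') ^ 2) := by
  simp [EuclideanSpace.dist_eq, vec3, Fin.sum_univ_three, Real.dist_eq, sq_abs]

section OrderedField

variable {K : Type*} [Field K] [LinearOrder K] [IsStrictOrderedRing K]

theorem sq_add_sq_pos_of_ne {a b : K} (h : (a, b) ≠ (0, 0)) : 0 < a ^ 2 + b ^ 2 := by
  refine (add_nonneg (sq_nonneg a) (sq_nonneg b)).lt_of_ne fun h0 => h ?_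
  obtain ⟨ha, hb⟩ := mul_self_add_mul_self_eq_zero.mp (by simpa only [sq] using h0.symm)
  rw [ha, hb]

theorem isLeast_sq_add_sq_of_line {a b : K} (hab : 0 < a ^ 2 + b ^ 2) (p q : K) :
    IsLeast (Set.range fun r : K => (p + r * a) ^ 2 + (q + r * b) ^ 2)
      ((a * q - b * p) ^ 2 / (a ^ 2 + b ^ 2)) := by
  -- Lagrange's identity, with `a (q + r b) - b (p + r a) = a q - b p` independent of `r`;
  -- the minimiser is the `r` for which `a (p + r a) + b (q + r b)` vanishes.
  refine ⟨⟨-(a * p + b * q) / (a ^ 2 + b ^ 2), by field_simp; ring⟩, ?_⟩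
  rintro _ ⟨r, rfl⟩
  rw [div_le_iff₀ hab]
  calc (a * q - b * p) ^ 2
      ≤ (a * (p + r * a) + b * (q + r * b)) ^ 2 + (a * q - b * p) ^ 2 :=
        le_add_of_nonneg_left (sq_nonneg _)
    _ = ((p + r * a) ^ 2 + (q + r * b) ^ 2) * (a ^ 2 + b ^ 2) := by ring

end OrderedField

theorem setDist_lineThrough_vec3 (x y z t u c : ℝ) (h : (u, c) ≠ (0, 0)) :
    setDist (lineThrough (vec3 0 0 (-1)) (vec3 1 0 0)) (lineThrough (vec3 x y z) (vec3 t u c)) =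
      √((u * (z + 1) - c * y) ^ 2 / (u ^ 2 + c ^ 2)) := by
  obtain ⟨⟨r₀, hr₀⟩, hle⟩ := isLeast_sq_add_sq_of_line (sq_add_sq_pos_of_ne h) y (z + 1)
  refine IsLeast.csInf_eq ⟨⟨_, ⟨x + r₀ * t, rfl⟩, _, ⟨r₀, rfl⟩, ?_⟩, ?_⟩
  · simp only [vec3_add_smul, dist_vec3, ← hr₀]
    congr 1; ring
  · rintro _ ⟨_, ⟨s, rfl⟩, _, ⟨r, rfl⟩, rfl⟩
    simp only [vec3_add_smul, dist_vec3]
    apply Real.sqrt_le_sqrt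
    calc _ ≤ (s - (x + r * t)) ^ 2 + ((y + r * u) ^ 2 + (z + 1 + r * c) ^ 2) :=
          le_add_of_nonneg_of_le (sq_nonneg _) (hle ⟨r, rfl⟩)
      _ = _ := by ring

/-- Let `ℓ₁` be the line through `(0,0,−1)` with direction `(1,0,0)`, and `ℓ` the line
through `(x,y,0)` with direction `(t,u,1−t−u)`, where `(u, 1−t−u) ≠ (0,0)`. Then
`d(ℓ₁, ℓ) = 2` iff the following polynomial equation holds. -/
theorem dist_line1_eq_two_iff
    (x y t u : ℝ) (h : (u, 1 - t - u) ≠ (0, 0)) :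
    setDist (lineThrough (vec3 0 0 (-1)) (vec3 1 0 0))
        (lineThrough (vec3 x y 0) (vec3 t u (1 - t - u))) = 2 ↔
      y ^ 2 * t ^ 2 + 2 * y ^ 2 * t * u - 2 * y ^ 2 * t + y ^ 2 * u ^ 2 - 2 * y ^ 2 * u
          + y ^ 2 + 2 * y * t * u + 2 * y * u ^ 2 - 2 * y * u
          - 4 * t ^ 2 - 8 * t * u + 8 * t - 7 * u ^ 2 + 8 * u - 4 = 0 := by
  rw [setDist_lineThrough_vec3 x y 0 t u (1 - t - u) h,
    Real.sqrt_eq_iff_mul_self_eq_of_pos two_pos, eq_div_iff (sq_add_sq_pos_of_ne h).ne']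
  constructor <;> intro h' <;> linear_combination -h'
end
end

section
/- Krawczyk's verification theorem: let F : ℝⁿ → ℝⁿ be continuously differentiable, let x ∈ ℝⁿ, r > 0, and let [x]ᵣ = {y ∈ ℝⁿ : ‖y − x‖∞ ≤ r} be the closed ball of radius r around x in the infinity norm. Suppose the derivative DF(x) is invertible, and the Krawczyk set K(F, [x]ᵣ) = { x − DF(x)⁻¹ F(x) + (I − DF(x)⁻¹ DF(y)) (z − x) : y ∈ [x]ᵣ, z ∈ [x]ᵣ } is contained in the interior of [x]ᵣ. Then F has exactly one zero in [x]ᵣ. -/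
/-!
Krawczyk's set is `{G x + DG(y) (z - x) : y, z ∈ [x]ᵣ}` for the simplified Newton map
`G y = y - A⁻¹ F y`. Comparing the points for `z = x + v` and `z = x - v` gives
`‖DG(y) v‖ < r` whenever `‖v‖ ≤ r`, so by compactness `‖DG(y)‖ ≤ κ < 1` on `[x]ᵣ` and `G` is a
contraction there. The mean value theorem along `[x, z]` puts `G z` in the closure of Krawczyk's
set, hence in `[x]ᵣ`. By Banach's fixed point theorem `G` has exactly one fixed point in `[x]ᵣ`,
and the fixed points of `G` are the zeros of `F`.
-/

open Set Metric Function
open scoped NNReal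

theorem LipschitzOnWith.existsUnique_isFixedPt {α : Type*} [MetricSpace α] {f : α → α}
    {s : Set α} {K : ℝ≥0} (hf : LipschitzOnWith K f s) (hK : K < 1) (hfs : MapsTo f s s)
    (hsc : IsComplete s) (hne : s.Nonempty) : ∃! x, x ∈ s ∧ IsFixedPt f x := by
  have hc : ContractingWith K (hfs.restrict f s s) := ⟨hK, hf.mapsToRestrict hfs⟩
  obtain ⟨x₀, hx₀⟩ := hne
  obtain ⟨x, hxs, hx, -⟩ := hc.exists_fixedPoint' hsc hfs hx₀ (edist_ne_top _ _)
  refine ⟨x, ⟨hxs, hx⟩, fun y ⟨hys, hy⟩ => ?_⟩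
  have : (⟨y, hys⟩ : s) = ⟨x, hxs⟩ :=
    hc.fixedPoint_unique' (Subtype.ext hy) (Subtype.ext hx)
  exact congrArg Subtype.val this

section Krawczyk

variable {E F : Type*} [NormedAddCommGroup E] [NormedSpace ℝ E]
  [NormedAddCommGroup F] [NormedSpace ℝ F]

theorem mem_ball_zero_of_add_mem_ball_of_sub_mem_ball {a c u : E} {r : ℝ}
    (hadd : c + u ∈ ball a r) (hsub : c - u ∈ ball a r) : u ∈ ball 0 r := by
  rw [mem_ball_iff_norm] at hadd hsub
  have : (2 : ℝ) * ‖u‖ ≤ ‖c + u - a‖ + ‖c - u - a‖ := by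
    calc (2 : ℝ) * ‖u‖ = ‖(c + u - a) - (c - u - a)‖ := by
          rw [← Real.norm_two, ← norm_smul, two_smul]; congr 1; abel
      _ ≤ _ := norm_sub_le _ _
  rw [mem_ball_zero_iff]
  linarith

theorem Convex.add_image_sub_mem_closedBall {s : Set E} (hs : Convex ℝ s) {f : E → F}
    {f' : E → E →L[ℝ] F} (hf : ∀ y ∈ s, HasFDerivWithinAt f (f' y) s y) {x z : E}
    (hx : x ∈ s) (hz : z ∈ s) {a c : F} {R : ℝ}
    (bound : ∀ y ∈ s, c + f' y (z - x) ∈ closedBall a R) :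
    c + (f z - f x) ∈ closedBall a R := by
  set ℓ := (AffineMap.lineMap x z : ℝ → E)
  have segm : MapsTo ℓ (Icc 0 1) s := hs.mapsTo_lineMap hx hz
  set g : ℝ → F := fun t => t • (c - a) + f (ℓ t)
  have hg : ∀ t ∈ Icc (0 : ℝ) 1,
      HasDerivWithinAt g ((c - a) + f' (ℓ t) (z - x)) (Icc 0 1) t := fun t ht => by
    have hfℓ : HasDerivWithinAt (f ∘ ℓ) (f' (ℓ t) (z - x)) (Icc 0 1) t :=
      (hf (ℓ t) (segm ht)).comp_hasDerivWithinAt t AffineMap.hasDerivWithinAt_lineMap segm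
    have := ((hasDerivWithinAt_id t _).smul_const (c - a)).add hfℓ
    rw [one_smul] at this
    exact this
  have hbound : ∀ t ∈ Ico (0 : ℝ) 1, ‖(c - a) + f' (ℓ t) (z - x)‖ ≤ R := fun t ht => by
    have hb := bound (ℓ t) (segm (Ico_subset_Icc_self ht))
    rwa [mem_closedBall_iff_norm, add_sub_right_comm] at hb
  have hg01 : g 1 - g 0 = c + (f z - f x) - a := by
    simp only [g, ℓ, AffineMap.lineMap_apply_one, AffineMap.lineMap_apply_zero, one_smul,
      zero_smul]
    abel
  rw [mem_closedBall_iff_norm, ← hg01]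
  exact norm_image_sub_le_of_norm_deriv_le_segment_01' hg hbound

theorem IsCompact.exists_lt_one_forall_nnnorm_le [ProperSpace E] {X : Type*} [TopologicalSpace X]
    {K : Set X} (hK : IsCompact K) (hne : K.Nonempty) {T : X → E →L[ℝ] F} (hT : ContinuousOn T K)
    {r : ℝ} (hr : 0 < r) (hlt : ∀ y ∈ K, ∀ v ∈ closedBall (0 : E) r, ‖T y v‖ < r) :
    ∃ κ : ℝ≥0, κ < 1 ∧ ∀ y ∈ K, ‖T y‖₊ ≤ κ := by
  have hcont : ContinuousOn (fun p : X × E => ‖T p.1 p.2‖) (K ×ˢ closedBall 0 r) :=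
    ((hT.comp continuousOn_fst fun _ hp => hp.1).clm_apply continuousOn_snd).norm
  obtain ⟨⟨y₀, v₀⟩, ⟨hy₀, hv₀⟩, hmax⟩ := (hK.prod (isCompact_closedBall 0 r)).exists_isMaxOn
    (hne.prod (nonempty_closedBall.2 hr.le)) hcont
  refine ⟨⟨‖T y₀ v₀‖ / r, by positivity⟩, ?_, fun y hy => ?_⟩
  · change ‖T y₀ v₀‖ / r < 1
    exact (div_lt_one hr).2 (hlt y₀ hy₀ v₀ hv₀)
  · change ‖T y‖ ≤ ‖T y₀ v₀‖ / r
    refine ContinuousLinearMap.opNorm_le_of_unit_norm (by positivity) fun u hu => ?_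
    have hru : r • u ∈ closedBall (0 : E) r := by
      simp [norm_smul, hu, abs_of_pos hr]
    have := hmax (mk_mem_prod hy hru)
    rw [le_div_iff₀ hr]
    simpa [norm_smul, abs_of_pos hr, mul_comm] using this

theorem existsUnique_isFixedPt_of_forall_add_fderiv_mem_ball [ProperSpace E] {G : E → E}
    {G' : E → E →L[ℝ] E} {x : E} {r : ℝ} (hr : 0 < r)
    (hG : ∀ y ∈ closedBall x r, HasFDerivWithinAt G (G' y) (closedBall x r) y)
    (hG'cont : ContinuousOn G' (closedBall x r))
    (hKball : ∀ y ∈ closedBall x r, ∀ z ∈ closedBall x r, G x + G' y (z - x) ∈ ball x r) :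
    ∃! ξ, ξ ∈ closedBall x r ∧ IsFixedPt G ξ := by
  have hG'lt : ∀ y ∈ closedBall x r, ∀ v ∈ closedBall (0 : E) r, ‖G' y v‖ < r := by
    intro y hy v hv
    rw [mem_closedBall_zero_iff] at hv
    have hplus := hKball y hy (x + v) (mem_closedBall_iff_norm.2 (by rwa [add_sub_cancel_left]))
    have hminus := hKball y hy (x - v)
      (mem_closedBall_iff_norm.2 (by rwa [sub_sub_cancel_left, norm_neg]))
    rw [add_sub_cancel_left] at hplus
    rw [sub_sub_cancel_left, map_neg, ← sub_eq_add_neg] at hminus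
    exact mem_ball_zero_iff.1 (mem_ball_zero_of_add_mem_ball_of_sub_mem_ball hplus hminus)
  obtain ⟨κ, hκ, hG'κ⟩ := (isCompact_closedBall x r).exists_lt_one_forall_nnnorm_le
    (nonempty_closedBall.2 hr.le) hG'cont hr hG'lt
  have hLip : LipschitzOnWith κ G (closedBall x r) :=
    (convex_closedBall x r).lipschitzOnWith_of_nnnorm_hasFDerivWithin_le hG hG'κ
  have hMaps : MapsTo G (closedBall x r) (closedBall x r) := fun z hz => by
    simpa using (convex_closedBall x r).add_image_sub_mem_closedBall hG
      (mem_closedBall_self hr.le) hz fun y hy => ball_subset_closedBall (hKball y hy z hz)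
  exact hLip.existsUnique_isFixedPt hκ hMaps isClosed_closedBall.isComplete
    (nonempty_closedBall.2 hr.le)

end Krawczyk

section SimplifiedNewton

variable {𝕜 E : Type*} [NontriviallyNormedField 𝕜] [NormedAddCommGroup E] [NormedSpace 𝕜 E]

def simplifiedNewtonMap (A : E ≃L[𝕜] E) (F : E → E) (y : E) : E := y - A.symm (F y)

theorem simplifiedNewtonMap_eq_self_iff {A : E ≃L[𝕜] E} {F : E → E} {y : E} :
    simplifiedNewtonMap A F y = y ↔ F y = 0 := by
  simp [simplifiedNewtonMap]

theorem hasFDerivAt_simplifiedNewtonMap {A : E ≃L[𝕜] E} {F : E → E} {F' : E →L[𝕜] E} {y : E}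
    (hF : HasFDerivAt F F' y) :
    HasFDerivAt (simplifiedNewtonMap A F)
      (ContinuousLinearMap.id 𝕜 E - (A.symm : E →L[𝕜] E) ∘L F') y :=
  (hasFDerivAt_id y).sub ((A.symm : E →L[𝕜] E).hasFDerivAt.comp y hF)

end SimplifiedNewton

theorem krawczyk_verification_general {n : ℕ}
    (F : (Fin n → ℝ) → (Fin n → ℝ)) (hF : ContDiff ℝ 1 F)
    (x : Fin n → ℝ) (r : ℝ) (hr : 0 < r)
    (A : (Fin n → ℝ) ≃L[ℝ] (Fin n → ℝ))
    (hK : {p : Fin n → ℝ |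
          ∃ y ∈ Metric.closedBall x r, ∃ z ∈ Metric.closedBall x r,
            p = x - A.symm (F x) + ((z - x) - A.symm (fderiv ℝ F y (z - x)))}
        ⊆ interior (Metric.closedBall x r)) :
    ∃! ξ : Fin n → ℝ, ξ ∈ Metric.closedBall x r ∧ F ξ = 0 := by
  set G' : (Fin n → ℝ) → (Fin n → ℝ) →L[ℝ] (Fin n → ℝ) := fun y =>
    ContinuousLinearMap.id ℝ _ - (A.symm : (Fin n → ℝ) →L[ℝ] (Fin n → ℝ)) ∘L fderiv ℝ F y
  have hG : ∀ y, HasFDerivAt (simplifiedNewtonMap A F) (G' y) y := fun y =>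
    hasFDerivAt_simplifiedNewtonMap (hF.differentiable one_ne_zero y).hasFDerivAt
  have hG'cont : Continuous G' :=
    continuous_const.sub (continuous_const.clm_comp (hF.continuous_fderiv one_ne_zero))
  have hKball : ∀ y ∈ closedBall x r, ∀ z ∈ closedBall x r,
      simplifiedNewtonMap A F x + G' y (z - x) ∈ ball x r :=
    fun y hy z hz => interior_closedBall x hr.ne' ▸ hK ⟨y, hy, z, hz, rfl⟩
  simpa only [IsFixedPt, simplifiedNewtonMap_eq_self_iff] using
    existsUnique_isFixedPt_of_forall_add_fderiv_mem_ball hr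
      (fun y _ => (hG y).hasFDerivWithinAt) hG'cont.continuousOn hKball

/-- **Krawczyk's verification theorem.** Let `F : ℝⁿ → ℝⁿ` be continuously
differentiable (here `ℝⁿ = Fin n → ℝ` carries the infinity norm, so that
`Metric.closedBall x r` is the ball `[x]ᵣ = {y : ‖y − x‖∞ ≤ r}`). Suppose the
derivative `DF(x)` is invertible, with inverse given by the continuous linear
equivalence `A` (so `A = DF(x)` as a continuous linear map), and that the Krawczyk set
`K(F,[x]ᵣ) = {x − DF(x)⁻¹ F(x) + (I − DF(x)⁻¹ DF(y))(z − x) : y, z ∈ [x]ᵣ}`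
is contained in the interior of `[x]ᵣ`. Then `F` has exactly one zero in `[x]ᵣ`. -/
theorem krawczyk_verification {n : ℕ}
    (F : (Fin n → ℝ) → (Fin n → ℝ)) (hF : ContDiff ℝ 1 F)
    (x : Fin n → ℝ) (r : ℝ) (hr : 0 < r)
    (A : (Fin n → ℝ) ≃L[ℝ] (Fin n → ℝ))
    (hA : (A : (Fin n → ℝ) →L[ℝ] (Fin n → ℝ)) = fderiv ℝ F x)
    (hK : {p : Fin n → ℝ |
          ∃ y ∈ Metric.closedBall x r, ∃ z ∈ Metric.closedBall x r,
            p = x - A.symm (F x) + ((z - x) - A.symm (fderiv ℝ F y (z - x)))}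
        ⊆ interior (Metric.closedBall x r)) :
    ∃! ξ : Fin n → ℝ, ξ ∈ Metric.closedBall x r ∧ F ξ = 0 :=
  krawczyk_verification_general F hF x r hr A hK
end
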